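/- arXiv:2012.07344 — 5 statements merged into one kernel-verified Lean document; each statement's English description precedes it below -/
import Mathlib

section
/- Let H₁ and H₂ be almost conjugate subgroups of a finite group G, and let m ≥ 1. For every function φ : {1,…,m} → {1,2}, let H_φ = ∏_{i=1}^m H_{φ(i)} ≤ G^m. Then for any two functions φ, ψ : {1,…,m} → {1,2}, the subgroups H_φ and H_ψ are almost conjugate in G^m. -/
/-- Two subgroups are almost conjugate if every conjugacy class meets them
in the same number of elements. -/
def AlmostConj {G : Type*} [Group G] (H₁ H₂ : Subgroup G) : Prop :=
  ∀ g : G, Nat.card {x : G | IsConj g x ∧ x ∈ H₁} =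
    Nat.card {x : G | IsConj g x ∧ x ∈ H₂}

lemma isConj_pi_iff {m : ℕ} {G : Type*} [Group G] (g x : Fin m → G) :
    IsConj g x ↔ ∀ i, IsConj (g i) (x i) := by
  constructor
  · rintro ⟨c, hc⟩ i
    exact ⟨Units.map (Pi.evalMonoidHom (fun _ => G) i) c, congrFun hc i⟩
  · intro hi
    choose c hc using fun i => (isConj_iff).1 (hi i)
    exact isConj_iff.2 ⟨fun i => c i, funext fun i => hc i⟩

lemma almostConj_aux {G : Type*} [Group G] (H : Fin 2 → Subgroup G)
    (h : AlmostConj (H 0) (H 1)) (a b : Fin 2) (g : G) :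
    Nat.card {x : G | IsConj g x ∧ x ∈ H a} =
      Nat.card {x : G | IsConj g x ∧ x ∈ H b} := by
  fin_cases a <;> fin_cases b <;> first | rfl | exact h g | exact (h g).symm

/-- If H₁, H₂ ≤ G are almost conjugate then for any two functions
φ, ψ : {1,…,m} → {1,2}, the product subgroups ∏ H_{φ(i)} and ∏ H_{ψ(i)}
are almost conjugate in G^m. -/
theorem almostConj_pi {G : Type*} [Group G] [Finite G]
    (H : Fin 2 → Subgroup G) (h : AlmostConj (H 0) (H 1))
    (m : ℕ) (hm : 1 ≤ m) (φ ψ : Fin m → Fin 2) :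
    AlmostConj (Subgroup.pi Set.univ fun i => H (φ i))
      (Subgroup.pi Set.univ fun i => H (ψ i)) := by
  intro g
  have key : ∀ (K : Fin m → Subgroup G),
      Nat.card {x : Fin m → G | IsConj g x ∧ x ∈ Subgroup.pi Set.univ K} =
        ∏ i, Nat.card {y : G | IsConj (g i) y ∧ y ∈ K i} := by
    intro K
    rw [← Nat.card_pi]
    apply Nat.card_congr
    refine (Equiv.setCongr ?_).trans (Equiv.subtypePiEquivPi
      (p := fun i y => IsConj (g i) y ∧ y ∈ K i))
    ext x
    simp only [Set.mem_setOf_eq, isConj_pi_iff, Subgroup.mem_pi, Set.mem_univ,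
      forall_true_left]
    exact forall_and.symm
  rw [key, key]
  exact Finset.prod_congr rfl fun i _ => almostConj_aux H h (φ i) (ψ i) (g i)
end

section
/- In the group G = (ℤ/8ℤ)* ⋉ ℤ/8ℤ, with h₃ = (3,4), h₄ = (5,4) and H₁ = {(1,0),(3,0),(5,0),(7,0)}, for every g ∈ G it is not the case that both g·h₃ ∈ H₁·g and g·h₄ ∈ H₁·g. -/
/-- The action of (ℤ/8ℤ)* on ℤ/8ℤ by multiplication, as a map into the
automorphisms of the (multiplicatively written) group ℤ/8ℤ. -/
def phi : (ZMod 8)ˣ →* MulAut (Multiplicative (ZMod 8)) where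
  toFun u := AddEquiv.toMultiplicative (DistribMulAction.toAddAut (ZMod 8)ˣ (ZMod 8) u)
  map_one' := by ext x; simp
  map_mul' := by intro u v; ext x; simp [mul_smul]

/-- The group G = (ℤ/8ℤ)* ⋉ ℤ/8ℤ, with (a,b)·(a',b') = (aa', ab'+b). -/
abbrev Gex := Multiplicative (ZMod 8) ⋊[phi] (ZMod 8)ˣ

/-- The element (a,b) of G. -/
def el (a : (ZMod 8)ˣ) (b : ZMod 8) : Gex := ⟨Multiplicative.ofAdd b, a⟩

def u1 : (ZMod 8)ˣ := 1
def u3 : (ZMod 8)ˣ := ⟨3, 3, by decide, by decide⟩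
def u5 : (ZMod 8)ˣ := ⟨5, 5, by decide, by decide⟩
def u7 : (ZMod 8)ˣ := ⟨7, 7, by decide, by decide⟩

/-- The set H₁ = {(1,0),(3,0),(5,0),(7,0)}. -/
def H1set : Set Gex := {el u1 0, el u3 0, el u5 0, el u7 0}

/-- The set H₂ = {(1,0),(3,4),(5,4),(7,0)}. -/
def H2set : Set Gex := {el u1 0, el u3 4, el u5 4, el u7 0}

/-- With h₃ = (3,4), h₄ = (5,4) and H₁ = {(1,0),(3,0),(5,0),(7,0)},
for every g ∈ G it is not the case that both gh₃ ∈ H₁g and gh₄ ∈ H₁g. -/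
theorem example_coset_property' (g : Gex) :
    ¬ ((∃ h ∈ H1set, g * el u3 4 = h * g) ∧ (∃ h ∈ H1set, g * el u5 4 = h * g)) := by
  rintro ⟨⟨h, hm, e3⟩, ⟨h', hm', e5⟩⟩
  obtain ⟨b, a⟩ := g
  simp only [H1set, Set.mem_insert_iff, Set.mem_singleton_iff] at hm hm'
  rcases hm with rfl|rfl|rfl|rfl <;> rcases hm' with rfl|rfl|rfl|rfl <;>
    simp only [el, SemidirectProduct.mk_eq_inl_mul_inr, SemidirectProduct.ext_iff] at e3 e5 <;>
    revert e3 e5 <;> revert a b <;> decide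
end

section
/- Two subgroups Λ₁ and Λ₂ of a finite group Γ are almost conjugate if and only if for every γ ∈ Γ, |F(Λ₁,γ)| = |F(Λ₂,γ)|, where F(Λ,γ) = {Λδ : δ ∈ Γ, Λδγ = Λδ}. -/
/-- The right coset Λδ of a subgroup Λ. -/
def rcoset {Γ : Type*} [Group Γ] (Λ : Subgroup Γ) (δ : Γ) : Set Γ :=
  {x | ∃ l ∈ Λ, x = l * δ}

/-- F(Λ,γ) = {Λδ : δ ∈ Γ, Λδγ = Λδ}, a set of right cosets of Λ. -/
def Fset {Γ : Type*} [Group Γ] (Λ : Subgroup Γ) (γ : Γ) : Set (Set Γ) :=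
  {s | ∃ δ : Γ, s = rcoset Λ δ ∧ rcoset Λ (δ * γ) = rcoset Λ δ}

section Aux

variable {Γ : Type*} [Group Γ]

lemma rcoset_eq_iff (Λ : Subgroup Γ) (a b : Γ) :
    rcoset Λ a = rcoset Λ b ↔ a * b⁻¹ ∈ Λ := by
  constructor
  · intro h
    have ha : a ∈ rcoset Λ a := ⟨1, Λ.one_mem, (one_mul a).symm⟩
    rw [h] at ha
    obtain ⟨l, hl, rfl⟩ := ha
    simpa using hl
  · intro h
    ext x
    constructor
    · rintro ⟨l, hl, rfl⟩
      exact ⟨l * (a * b⁻¹), Λ.mul_mem hl h, by group⟩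
    · rintro ⟨l, hl, rfl⟩
      refine ⟨l * (b * a⁻¹), Λ.mul_mem hl ?_, by group⟩
      have := Λ.inv_mem h
      simpa [mul_inv_rev] using this

lemma card_mul_card_Fset (Λ : Subgroup Γ) (γ : Γ) :
    Nat.card Λ * Nat.card (Fset Λ γ) = Nat.card {δ : Γ | δ * γ * δ⁻¹ ∈ Λ} := by
  classical
  rw [← Nat.card_prod]
  have key : ∀ s : Fset Λ γ, ∃ δ : Γ, (s : Set Γ) = rcoset Λ δ ∧ δ * γ * δ⁻¹ ∈ Λ := by
    rintro ⟨s, δ, rfl, hδ⟩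
    exact ⟨δ, rfl, (rcoset_eq_iff Λ (δ * γ) δ).1 hδ⟩
  let rep : Fset Λ γ → Γ := fun s => (key s).choose
  have hrep1 : ∀ s : Fset Λ γ, (s : Set Γ) = rcoset Λ (rep s) := fun s => (key s).choose_spec.1
  have hrep2 : ∀ s : Fset Λ γ, rep s * γ * (rep s)⁻¹ ∈ Λ := fun s => (key s).choose_spec.2
  refine Nat.card_eq_of_bijective
    (fun p : Λ × Fset Λ γ => (⟨(p.1 : Γ) * rep p.2, ?_⟩ : {δ : Γ | δ * γ * δ⁻¹ ∈ Λ})) ⟨?_, ?_⟩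
  · show (p.1 : Γ) * rep p.2 * γ * ((p.1 : Γ) * rep p.2)⁻¹ ∈ Λ
    have h := Λ.mul_mem (Λ.mul_mem p.1.2 (hrep2 p.2)) (Λ.inv_mem p.1.2)
    have heq : (p.1 : Γ) * (rep p.2 * γ * (rep p.2)⁻¹) * (p.1 : Γ)⁻¹
        = (p.1 : Γ) * rep p.2 * γ * ((p.1 : Γ) * rep p.2)⁻¹ := by group
    rwa [heq] at h
  · rintro ⟨l, s⟩ ⟨l', s'⟩ hls
    have h : (l : Γ) * rep s = (l' : Γ) * rep s' := congrArg Subtype.val hls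
    have hmem : rep s * (rep s')⁻¹ ∈ Λ := by
      have : rep s * (rep s')⁻¹ = (l : Γ)⁻¹ * l' := by
        rw [eq_comm, ← mul_inv_eq_iff_eq_mul] at h ⊢
        group at h ⊢
        rw [← h]; group
      rw [this]; exact Λ.mul_mem (Λ.inv_mem l.2) l'.2
    have hs : s = s' := by
      apply Subtype.ext
      rw [hrep1 s, hrep1 s']
      exact (rcoset_eq_iff Λ _ _).2 hmem
    subst hs
    have hl : l = l' := Subtype.ext (mul_right_cancel h)
    rw [hl]
  · rintro ⟨δ, hδ⟩
    have hδ' : δ * γ * δ⁻¹ ∈ Λ := hδ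
    let s : Fset Λ γ := ⟨rcoset Λ δ, δ, rfl, (rcoset_eq_iff Λ (δ * γ) δ).2 hδ'⟩
    have hc : rcoset Λ δ = rcoset Λ (rep s) := hrep1 s
    refine ⟨⟨⟨δ * (rep s)⁻¹, (rcoset_eq_iff Λ δ (rep s)).1 hc⟩, s⟩, ?_⟩
    apply Subtype.ext
    show δ * (rep s)⁻¹ * rep s = δ
    simp [mul_assoc]

lemma card_conj_mul (Λ : Subgroup Γ) (γ : Γ) :
    Nat.card {δ : Γ | δ * γ * δ⁻¹ ∈ Λ} =
      Nat.card {x : Γ | IsConj γ x ∧ x ∈ Λ} * Nat.card (Subgroup.centralizer {γ}) := by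
  classical
  rw [← Nat.card_prod]
  have key : ∀ x : {x : Γ | IsConj γ x ∧ x ∈ Λ}, ∃ d : Γ, d * γ * d⁻¹ = (x : Γ) := by
    rintro ⟨x, hx, _⟩
    obtain ⟨c, hc⟩ := isConj_iff.1 hx
    exact ⟨c, hc⟩
  let rep : {x : Γ | IsConj γ x ∧ x ∈ Λ} → Γ := fun x => (key x).choose
  have hrep : ∀ x, rep x * γ * (rep x)⁻¹ = (x : Γ) := fun x => (key x).choose_spec
  have hval : ∀ (x : {x : Γ | IsConj γ x ∧ x ∈ Λ}) (c : Subgroup.centralizer ({γ} : Set Γ)),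
      rep x * c * γ * (rep x * c)⁻¹ = (x : Γ) := by
    intro x c
    have hcom : (c : Γ) * γ = γ * c := Subgroup.mem_centralizer_singleton_iff.1 c.2
    have h1 : rep x * (c : Γ) * γ * (rep x * c)⁻¹ = rep x * ((c : Γ) * γ * (c : Γ)⁻¹) * (rep x)⁻¹ := by
      group
    rw [h1, hcom]
    simpa using hrep x
  symm
  refine Nat.card_eq_of_bijective
    (fun p : {x : Γ | IsConj γ x ∧ x ∈ Λ} × Subgroup.centralizer ({γ} : Set Γ) =>
      (⟨rep p.1 * p.2, ?_⟩ : {δ : Γ | δ * γ * δ⁻¹ ∈ Λ})) ⟨?_, ?_⟩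
  · show rep p.1 * (p.2 : Γ) * γ * (rep p.1 * (p.2 : Γ))⁻¹ ∈ Λ
    rw [hval p.1 p.2]
    exact p.1.2.2
  · rintro ⟨x, c⟩ ⟨x', c'⟩ hp
    have h : rep x * (c : Γ) = rep x' * (c' : Γ) := congrArg Subtype.val hp
    have hx : x = x' := by
      apply Subtype.ext
      rw [← hval x c, ← hval x' c', h]
    subst hx
    have : c = c' := Subtype.ext (mul_left_cancel h)
    rw [this]
  · rintro ⟨δ, hδ⟩
    have hδ' : δ * γ * δ⁻¹ ∈ Λ := hδ
    have hconj : IsConj γ (δ * γ * δ⁻¹) := isConj_iff.2 ⟨δ, rfl⟩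
    set x : {x : Γ | IsConj γ x ∧ x ∈ Λ} := ⟨δ * γ * δ⁻¹, hconj, hδ'⟩ with hxdef
    have h1 : rep x * γ * (rep x)⁻¹ = δ * γ * δ⁻¹ := hrep x
    have hcmem : (rep x)⁻¹ * δ ∈ Subgroup.centralizer ({γ} : Set Γ) := by
      rw [Subgroup.mem_centralizer_singleton_iff]
      calc (rep x)⁻¹ * δ * γ = (rep x)⁻¹ * (δ * γ * δ⁻¹) * δ := by group
        _ = (rep x)⁻¹ * (rep x * γ * (rep x)⁻¹) * δ := by rw [h1]
        _ = γ * ((rep x)⁻¹ * δ) := by group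
    refine ⟨⟨x, ⟨(rep x)⁻¹ * δ, hcmem⟩⟩, ?_⟩
    apply Subtype.ext
    show rep x * ((rep x)⁻¹ * δ) = δ
    simp [← mul_assoc]

lemma key_count (Λ : Subgroup Γ) (γ : Γ) :
    Nat.card Λ * Nat.card (Fset Λ γ) =
      Nat.card {x : Γ | IsConj γ x ∧ x ∈ Λ} * Nat.card (Subgroup.centralizer {γ}) := by
  rw [card_mul_card_Fset, card_conj_mul]

lemma card_isConj_one (Λ : Subgroup Γ) :
    Nat.card {x : Γ | IsConj 1 x ∧ x ∈ Λ} = 1 := by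
  have h : {x : Γ | IsConj 1 x ∧ x ∈ Λ} = {1} := by
    ext x
    simp only [Set.mem_setOf_eq, Set.mem_singleton_iff]
    constructor
    · rintro ⟨hx, -⟩
      exact (isConj_one_left.1 hx.symm)
    · rintro rfl
      exact ⟨IsConj.refl 1, Λ.one_mem⟩
  rw [h]
  simp

lemma card_centralizer_one : Nat.card (Subgroup.centralizer ({1} : Set Γ)) = Nat.card Γ := by
  have h : Subgroup.centralizer ({1} : Set Γ) = ⊤ := by
    ext x
    simp [Subgroup.mem_centralizer_singleton_iff]
  rw [h, Subgroup.card_top]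

lemma card_eq_of_almostConj [Finite Γ] {Λ₁ Λ₂ : Subgroup Γ} (h : AlmostConj Λ₁ Λ₂) :
    Nat.card Λ₁ = Nat.card Λ₂ := by
  classical
  have _inst : Fintype Γ := Fintype.ofFinite Γ
  have _inst2 : Fintype (ConjClasses Γ) := Fintype.ofFinite _
  have key : ∀ Λ : Subgroup Γ, Nat.card Λ =
      ∑ c : ConjClasses Γ,
        (Finset.univ.filter (fun x : Γ => ConjClasses.mk x = c ∧ x ∈ Λ)).card := by
    intro Λ
    rw [Nat.card_eq_fintype_card, Fintype.card_subtype]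
    rw [Finset.card_eq_sum_card_fiberwise (f := ConjClasses.mk)
      (t := Finset.univ) (fun x _ => Finset.mem_univ _)]
    refine Finset.sum_congr rfl fun c _ => ?_
    rw [Finset.filter_filter]
    congr 1
    ext x
    simp [and_comm]
  have fib : ∀ (Λ : Subgroup Γ) (c : ConjClasses Γ) (g : Γ), ConjClasses.mk g = c →
      (Finset.univ.filter (fun x : Γ => ConjClasses.mk x = c ∧ x ∈ Λ)).card =
        Nat.card {x : Γ | IsConj g x ∧ x ∈ Λ} := by
    intro Λ c g hg
    rw [Nat.card_eq_fintype_card, Fintype.card_subtype]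
    congr 1
    ext x
    subst hg
    rw [Finset.mem_filter, Finset.mem_filter, ConjClasses.mk_eq_mk_iff_isConj,
      isConj_comm]
    simp [Set.mem_setOf_eq]
  rw [key Λ₁, key Λ₂]
  refine Finset.sum_congr rfl fun c _ => ?_
  obtain ⟨g, hg⟩ := ConjClasses.exists_rep c
  rw [fib Λ₁ c g hg, fib Λ₂ c g hg, h g]

end Aux

/-- Λ₁ and Λ₂ are almost conjugate iff |F(Λ₁,γ)| = |F(Λ₂,γ)| for all γ. -/
theorem almostConj_iff_card_Fset (Γ : Type*) [Group Γ] [Finite Γ]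
    (Λ₁ Λ₂ : Subgroup Γ) :
    AlmostConj Λ₁ Λ₂ ↔ ∀ γ : Γ, Nat.card (Fset Λ₁ γ) = Nat.card (Fset Λ₂ γ) := by
  have hpos1 : 0 < Nat.card Λ₁ := Nat.card_pos
  have hpos2 : 0 < Nat.card Λ₂ := Nat.card_pos
  constructor
  · intro h γ
    have hcard := card_eq_of_almostConj h
    have k1 := key_count Λ₁ γ
    have k2 := key_count Λ₂ γ
    have hmul : Nat.card Λ₁ * Nat.card (Fset Λ₁ γ) = Nat.card Λ₁ * Nat.card (Fset Λ₂ γ) := by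
      rw [k1, h γ, ← k2, hcard]
    exact Nat.eq_of_mul_eq_mul_left hpos1 hmul
  · intro h
    have k1 := key_count Λ₁ 1
    have k2 := key_count Λ₂ 1
    rw [card_isConj_one, card_centralizer_one, one_mul] at k1 k2
    have hGpos : 0 < Nat.card Γ := Nat.card_pos
    have hFpos : 0 < Nat.card (Fset Λ₂ 1) := by
      rcases Nat.eq_zero_or_pos (Nat.card (Fset Λ₂ 1)) with h0 | h0
      · rw [h0, mul_zero] at k2; omega
      · exact h0
    have hΛ : Nat.card Λ₁ = Nat.card Λ₂ := by
      apply Nat.eq_of_mul_eq_mul_right hFpos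
      rw [← h 1] at k2 ⊢
      rw [k1, k2]
    intro g
    have k1g := key_count Λ₁ g
    have k2g := key_count Λ₂ g
    have hC : 0 < Nat.card (Subgroup.centralizer ({g} : Set Γ)) := Nat.card_pos
    apply Nat.eq_of_mul_eq_mul_right hC
    rw [← k1g, ← k2g, hΛ, h g]
end

section
/- Let Λ₁, Λ₂ be almost conjugate subgroups of a finite group Γ, let n ∈ ℕ and γ₁,…,γₙ ∈ Γ. Then there exists a bijection ρ : F(Λ₁, γ₁⋯γₙ) → F(Λ₂, γ₁⋯γₙ) such that for every p dividing n with the property that γᵢ = γⱼ whenever i ≡ j (mod n/p), a coset C ∈ F(Λ₁, γ₁⋯γₙ) lies in F(Λ₁, γ₁⋯γ_{n/p}) if and only if ρ(C) lies in F(Λ₂, γ₁⋯γ_{n/p}). -/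
/-- The product γ₁⋯γ_k of the first k of the elements γ₁,…,γₙ. -/
def partialProd {Γ : Type*} [Group Γ] {n : ℕ} (γ : Fin n → Γ) (k : ℕ)
    (hk : k ≤ n) : Γ :=
  (List.ofFn fun i : Fin k => γ (Fin.castLE hk i)).prod

/-!
Write `Fset Λ g` as the right cosets of `Λ` fixed by right multiplication by `g`. Counting the
`δ` with `δ g δ⁻¹ ∈ Λ` in two ways gives `|F(Λ, g)| · |Λ| = |gᴳ ∩ Λ| · |C(g)|`; almost conjugate
subgroups have the same order (sum over conjugacy classes), so `|F(Λ₁, g)| = |F(Λ₂, g)|`.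

Periods of `γ` dividing `n` are closed under `gcd`, so every `γ₁⋯γ_m` with `m` such a period is a
power of `x = γ₁⋯γ_d`, `d` the least one. A coset lies in `F(Λ, xᵏ)` iff its period under `x`
divides `k`; the counts of cosets whose period divides `k` agree for `Λ₁` and `Λ₂`, hence by Möbius
inversion so do the counts of cosets of each exact period, and `ρ` matches cosets of equal period.
-/

open MulOpposite Pointwise

section Cosets

variable {Γ : Type*} [Group Γ] (Λ : Subgroup Γ)

theorem rcoset_eq_op_smul (δ : Γ) : rcoset Λ δ = op δ • (Λ : Set Γ) := by
  ext x
  rw [mem_rightCoset_iff]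
  exact ⟨by rintro ⟨l, hl, rfl⟩; simpa using hl, fun h => ⟨x * δ⁻¹, h, by group⟩⟩

theorem mem_rcoset_iff {x δ : Γ} : x ∈ rcoset Λ δ ↔ rcoset Λ x = rcoset Λ δ := by
  rw [rcoset_eq_op_smul, rcoset_eq_op_smul, rightCoset_eq_iff, mem_rightCoset_iff, SetLike.mem_coe,
    ← inv_mem_iff, mul_inv_rev, inv_inv]

theorem rcoset_mul (δ g : Γ) : rcoset Λ (δ * g) = op g • rcoset Λ δ := by
  rw [rcoset_eq_op_smul, rcoset_eq_op_smul, op_mul, mul_smul]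

theorem mem_Fset_iff {C : Set Γ} {g : Γ} :
    C ∈ Fset Λ g ↔ C ∈ Set.range (rcoset Λ) ∧ op g • C = C := by
  constructor
  · rintro ⟨δ, rfl, h⟩
    exact ⟨⟨δ, rfl⟩, by rw [← rcoset_mul, h]⟩
  · rintro ⟨⟨δ, rfl⟩, h⟩
    exact ⟨δ, rfl, by rw [rcoset_mul, h]⟩

theorem rcoset_mem_Fset_iff {δ g : Γ} : rcoset Λ δ ∈ Fset Λ g ↔ δ * g * δ⁻¹ ∈ Λ := by
  rw [mem_Fset_iff, ← rcoset_mul, and_iff_right (Set.mem_range_self δ), rcoset_eq_op_smul,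
    rcoset_eq_op_smul, rightCoset_eq_iff, ← inv_mem_iff, mul_inv_rev, inv_inv, mul_assoc]

theorem mem_Fset_pow_iff {C : Set Γ} {x : Γ} {k : ℕ} :
    C ∈ Fset Λ (x ^ k) ↔ C ∈ Set.range (rcoset Λ) ∧ MulAction.period (op x) C ∣ k := by
  rw [mem_Fset_iff, op_pow, MulAction.pow_smul_eq_iff_period_dvd]

end Cosets

theorem Nat.card_eq_sum_card_fiber {α β : Type*} [Finite α] [Fintype β] (f : α → β) :
    Nat.card α = ∑ b, Nat.card {a // f a = b} := by
  rw [← Nat.card_congr (Equiv.sigmaFiberEquiv f), Nat.card_sigma]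

theorem Nat.card_eq_card_mul_of_card_fiber {α β : Type*} [Finite α] [Finite β] (f : α → β)
    {c : ℕ} (h : ∀ b, Nat.card {a // f a = b} = c) : Nat.card α = Nat.card β * c := by
  have := Fintype.ofFinite β
  rw [Nat.card_eq_sum_card_fiber f, Finset.sum_congr rfl fun b _ => h b, Finset.sum_const,
    smul_eq_mul, Finset.card_univ, Nat.card_eq_fintype_card]

theorem Nat.card_dvd_eq_sum_card_eq {α : Type*} [Finite α] (f : α → ℕ) {k : ℕ} (hk : k ≠ 0) :
    Nat.card {a // f a ∣ k} = ∑ e ∈ k.divisors, Nat.card {a // f a = e} := by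
  classical
  have := Fintype.ofFinite α
  simp only [Nat.card_eq_fintype_card, Fintype.card_subtype]
  rw [Finset.card_eq_sum_card_fiberwise (f := f) (t := k.divisors)
    fun a ha => Nat.mem_divisors.2 ⟨(Finset.mem_filter.1 ha).2, hk⟩]
  refine Finset.sum_congr rfl fun e he => ?_
  rw [Finset.filter_filter]
  refine congrArg Finset.card (Finset.filter_congr fun a _ => ?_)
  exact ⟨And.right, fun hae => ⟨hae ▸ Nat.dvd_of_mem_divisors he, hae⟩⟩

/-- Möbius inversion on the divisor lattice, in counting form. -/
theorem Nat.card_fiber_eq_of_card_dvd_eq {α β : Type*} [Finite α] [Finite β] {f : α → ℕ}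
    {g : β → ℕ} (hf : ∀ a, f a ≠ 0) (hg : ∀ b, g b ≠ 0)
    (h : ∀ k ≠ 0, Nat.card {a // f a ∣ k} = Nat.card {b // g b ∣ k}) (k : ℕ) :
    Nat.card {a // f a = k} = Nat.card {b // g b = k} := by
  induction k using Nat.strong_induction_on with
  | _ k ih =>
    rcases eq_or_ne k 0 with rfl | hk
    · have : IsEmpty {a // f a = 0} := ⟨fun a => hf a.1 a.2⟩
      have : IsEmpty {b // g b = 0} := ⟨fun b => hg b.1 b.2⟩
      simp only [Nat.card_of_isEmpty]
    · have hk' := h k hk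
      rw [Nat.card_dvd_eq_sum_card_eq f hk, Nat.card_dvd_eq_sum_card_eq g hk,
        ← Nat.cons_self_properDivisors hk, Finset.sum_cons, Finset.sum_cons,
        Finset.sum_congr rfl fun e he => ih e (Nat.mem_properDivisors.1 he).2] at hk'
      omega

section Counting

variable {Γ : Type*} [Group Γ]

theorem card_subgroup_inter_conjClass (Λ : Subgroup Γ) (g : Γ) :
    Nat.card {x : Λ // ConjClasses.mk (x : Γ) = ConjClasses.mk g} =
      Nat.card {x : Γ | IsConj g x ∧ x ∈ Λ} :=
  Nat.card_congr
    { toFun := fun x => ⟨x.1, (ConjClasses.mk_eq_mk_iff_isConj.1 x.2).symm, x.1.2⟩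
      invFun := fun x => ⟨⟨x, x.2.2⟩, ConjClasses.mk_eq_mk_iff_isConj.2 x.2.1.symm⟩
      left_inv := fun _ => rfl
      right_inv := fun _ => rfl }

variable [Finite Γ]

theorem card_conj_mem_eq_card_Fset_mul (Λ : Subgroup Γ) (g : Γ) :
    Nat.card {δ : Γ // δ * g * δ⁻¹ ∈ Λ} = Nat.card (Fset Λ g) * Nat.card Λ := by
  refine Nat.card_eq_card_mul_of_card_fiber
    (fun δ : {δ : Γ // δ * g * δ⁻¹ ∈ Λ} =>
      (⟨rcoset Λ δ, (rcoset_mem_Fset_iff Λ).2 δ.2⟩ : Fset Λ g)) fun ⟨C, hC⟩ => ?_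
  obtain ⟨⟨δ₀, rfl⟩, -⟩ := (mem_Fset_iff Λ).1 hC
  calc _ = Nat.card (rcoset Λ δ₀) := Nat.card_congr
        { toFun := fun δ => ⟨δ.1.1, (mem_rcoset_iff Λ).2 (congrArg Subtype.val δ.2)⟩
          invFun := fun x => ⟨⟨x, (rcoset_mem_Fset_iff Λ).1 (by rwa [(mem_rcoset_iff Λ).1 x.2])⟩,
            Subtype.ext ((mem_rcoset_iff Λ).1 x.2)⟩
          left_inv := fun _ => rfl
          right_inv := fun _ => rfl }
    _ = Nat.card Λ := by rw [rcoset_eq_op_smul, Set.natCard_smul_set]; rfl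

theorem card_conj_mem_eq_card_isConj_mem_mul (Λ : Subgroup Γ) (g : Γ) :
    Nat.card {δ : Γ // δ * g * δ⁻¹ ∈ Λ} =
      Nat.card {x : Γ | IsConj g x ∧ x ∈ Λ} * Nat.card {δ : Γ // δ * g * δ⁻¹ = g} := by
  refine Nat.card_eq_card_mul_of_card_fiber
    (fun δ : {δ : Γ // δ * g * δ⁻¹ ∈ Λ} =>
      (⟨δ.1 * g * δ.1⁻¹, isConj_iff.2 ⟨δ.1, rfl⟩, δ.2⟩ : {x : Γ | IsConj g x ∧ x ∈ Λ}))
    fun ⟨x, hx, hxΛ⟩ => ?_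
  obtain ⟨c, rfl⟩ := isConj_iff.1 hx
  have conj_mul (δ : Γ) : c * δ * g * (c * δ)⁻¹ = c * (δ * g * δ⁻¹) * c⁻¹ := by group
  exact Nat.card_congr
    { toFun := fun δ => ⟨c⁻¹ * δ.1.1, by
        have hδ : δ.1.1 * g * δ.1.1⁻¹ = c * g * c⁻¹ := congrArg Subtype.val δ.2
        calc c⁻¹ * δ.1.1 * g * (c⁻¹ * δ.1.1)⁻¹ = c⁻¹ * (δ.1.1 * g * δ.1.1⁻¹) * c := by group
          _ = g := by rw [hδ]; group⟩
      invFun := fun δ => ⟨⟨c * δ.1, by rwa [conj_mul, δ.2]⟩,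
        Subtype.ext (show c * δ.1 * g * (c * δ.1)⁻¹ = c * g * c⁻¹ by rw [conj_mul, δ.2])⟩
      left_inv := fun δ => Subtype.ext (Subtype.ext (mul_inv_cancel_left c _))
      right_inv := fun δ => Subtype.ext (inv_mul_cancel_left c _) }

variable {Λ₁ Λ₂ : Subgroup Γ}

theorem AlmostConj.card_eq (h : AlmostConj Λ₁ Λ₂) : Nat.card Λ₁ = Nat.card Λ₂ := by
  have := Fintype.ofFinite (ConjClasses Γ)
  rw [Nat.card_eq_sum_card_fiber fun x : Λ₁ => ConjClasses.mk (x : Γ),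
    Nat.card_eq_sum_card_fiber fun x : Λ₂ => ConjClasses.mk (x : Γ)]
  refine Finset.sum_congr rfl fun q _ => ?_
  obtain ⟨g, rfl⟩ := ConjClasses.mk_surjective q
  rw [card_subgroup_inter_conjClass, card_subgroup_inter_conjClass, h g]

theorem AlmostConj.card_Fset_eq (h : AlmostConj Λ₁ Λ₂) (g : Γ) :
    Nat.card (Fset Λ₁ g) = Nat.card (Fset Λ₂ g) := by
  refine Nat.eq_of_mul_eq_mul_right (Nat.card_pos (α := Λ₁)) ?_
  calc Nat.card (Fset Λ₁ g) * Nat.card Λ₁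
      = Nat.card {x : Γ | IsConj g x ∧ x ∈ Λ₁} * Nat.card {δ : Γ // δ * g * δ⁻¹ = g} := by
        rw [← card_conj_mem_eq_card_Fset_mul, card_conj_mem_eq_card_isConj_mem_mul]
    _ = Nat.card {x : Γ | IsConj g x ∧ x ∈ Λ₂} * Nat.card {δ : Γ // δ * g * δ⁻¹ = g} := by
        rw [h g]
    _ = Nat.card (Fset Λ₂ g) * Nat.card Λ₁ := by
        rw [← card_conj_mem_eq_card_isConj_mem_mul, card_conj_mem_eq_card_Fset_mul, h.card_eq]

end Counting

section Period

variable {Γ : Type*} [Group Γ]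

theorem card_period_dvd_eq_card_Fset (Λ : Subgroup Γ) (x : Γ) (N k : ℕ) :
    Nat.card {C : Fset Λ (x ^ N) // MulAction.period (op x) (C : Set Γ) ∣ k} =
      Nat.card (Fset Λ (x ^ N.gcd k)) :=
  Nat.card_congr <| (Equiv.subtypeSubtypeEquivSubtypeInter (· ∈ Fset Λ (x ^ N))
    fun C => MulAction.period (op x) C ∣ k).trans <|
      Equiv.subtypeEquivRight (q := (· ∈ Fset Λ (x ^ N.gcd k))) fun C => by
        simp only [mem_Fset_pow_iff, Nat.dvd_gcd_iff, and_assoc]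

variable [Finite Γ]

theorem AlmostConj.exists_bijective_mem_Fset_pow_iff {Λ₁ Λ₂ : Subgroup Γ} (h : AlmostConj Λ₁ Λ₂)
    (x : Γ) (N : ℕ) :
    ∃ ρ : Fset Λ₁ (x ^ N) → Fset Λ₂ (x ^ N), Function.Bijective ρ ∧
      ∀ (k : ℕ) (C : Fset Λ₁ (x ^ N)),
        (C : Set Γ) ∈ Fset Λ₁ (x ^ k) ↔ (ρ C : Set Γ) ∈ Fset Λ₂ (x ^ k) := by
  have : Finite Γᵐᵒᵖ := Finite.of_equiv Γ opEquiv
  have hfiber := Nat.card_fiber_eq_of_card_dvd_eq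
    (f := fun C : Fset Λ₁ (x ^ N) => MulAction.period (op x) (C : Set Γ))
    (g := fun C : Fset Λ₂ (x ^ N) => MulAction.period (op x) (C : Set Γ))
    (fun _ => (MulAction.period_pos_of_orderOf_pos (orderOf_pos _) _).ne')
    (fun _ => (MulAction.period_pos_of_orderOf_pos (orderOf_pos _) _).ne')
    fun k _ => by rw [card_period_dvd_eq_card_Fset, card_period_dvd_eq_card_Fset, h.card_Fset_eq]
  obtain ⟨ρ, hρ⟩ : ∃ ρ : Fset Λ₁ (x ^ N) ≃ Fset Λ₂ (x ^ N), ∀ C,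
      MulAction.period (op x) (ρ C : Set Γ) = MulAction.period (op x) (C : Set Γ) :=
    let e k := (Finite.card_eq.1 (hfiber k)).some
    ⟨Equiv.ofFiberEquiv e, Equiv.ofFiberEquiv_map e⟩
  refine ⟨ρ, ρ.bijective, fun k C => ?_⟩
  rw [mem_Fset_pow_iff, mem_Fset_pow_iff, hρ,
    and_iff_right ((mem_Fset_pow_iff Λ₁).1 C.2).1,
    and_iff_right ((mem_Fset_pow_iff Λ₂).1 (ρ C).2).1]

end Period

section Sequence

variable {n : ℕ}

def HasPeriod {α : Type*} (γ : Fin n → α) (m : ℕ) : Prop :=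
  ∀ i j : Fin n, (i : ℕ) % m = (j : ℕ) % m → γ i = γ j

theorem hasPeriod_self {α : Type*} (γ : Fin n → α) : HasPeriod γ n := fun i j hij => by
  rw [Nat.mod_eq_of_lt i.2, Nat.mod_eq_of_lt j.2] at hij
  exact congrArg γ (Fin.ext hij)

/-- Periods dividing `n` are periods of the cyclic sequence, so the Chinese remainder theorem
applies. -/
theorem HasPeriod.gcd {α : Type*} {γ : Fin n → α} {m m' : ℕ} (hm : HasPeriod γ m)
    (hm' : HasPeriod γ m') (hmn : m ∣ n) (hm'n : m' ∣ n) : HasPeriod γ (m.gcd m') := by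
  intro i j hij
  obtain ⟨k, hki, hkj⟩ := Nat.chineseRemainder' hij
  let l : Fin n := ⟨k % n, Nat.mod_lt k i.pos⟩
  calc γ i = γ l := hm _ _ (by rw [Nat.mod_mod_of_dvd _ hmn]; exact hki.symm)
    _ = γ j := hm' _ _ (by rw [Nat.mod_mod_of_dvd _ hm'n]; exact hkj)

variable {Γ : Type*} [Group Γ] (γ : Fin n → Γ)

theorem partialProd_mul_eq_pow {d : ℕ} (hd : d ≤ n) (hper : HasPeriod γ d) (t : ℕ)
    (h : d * t ≤ n) : partialProd γ (d * t) h = partialProd γ d hd ^ t := by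
  unfold partialProd
  rw [List.ofFn_mul', List.prod_flatten, List.map_ofFn, ← List.prod_replicate, ← List.ofFn_const]
  congr 2
  funext i
  refine congrArg List.prod (congrArg List.ofFn (funext fun j => hper _ _ ?_))
  simp

theorem exists_partialProd_eq_pow :
    ∃ (x : Γ) (N : ℕ), partialProd γ n le_rfl = x ^ N ∧
      ∀ m (hm : m ≤ n), m ∣ n → HasPeriod γ m → ∃ k, partialProd γ m hm = x ^ k := by
  rcases n.eq_zero_or_pos with rfl | hn
  · refine ⟨1, 0, (pow_zero _).symm, fun m hm _ _ => ⟨0, ?_⟩⟩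
    obtain rfl := Nat.le_zero.1 hm
    exact (pow_zero _).symm
  classical
  have hex : ∃ d, 0 < d ∧ d ∣ n ∧ HasPeriod γ d := ⟨n, hn, dvd_rfl, hasPeriod_self γ⟩
  obtain ⟨hd0, hdn, hdper⟩ := Nat.find_spec hex
  set d := Nat.find hex
  have hd : d ≤ n := Nat.le_of_dvd hn hdn
  have dvd_of_hasPeriod (m : ℕ) (hmn : m ∣ n) (hm : HasPeriod γ m) : d ∣ m := by
    have hle : d ≤ d.gcd m := Nat.find_min' hex ⟨Nat.gcd_pos_of_pos_left _ hd0,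
      (Nat.gcd_dvd_left d m).trans hdn, hdper.gcd hm hdn hmn⟩
    rw [← Nat.le_antisymm (Nat.le_of_dvd hd0 (Nat.gcd_dvd_left d m)) hle]
    exact Nat.gcd_dvd_right d m
  have pow_of_dvd (m : ℕ) (hm : m ≤ n) (hdm : d ∣ m) :
      ∃ k, partialProd γ m hm = partialProd γ d hd ^ k := by
    obtain ⟨k, rfl⟩ := hdm
    exact ⟨k, partialProd_mul_eq_pow γ hd hdper k hm⟩
  obtain ⟨N, hN⟩ := pow_of_dvd n le_rfl hdn
  exact ⟨_, N, hN, fun m hm hmn hper => pow_of_dvd m hm (dvd_of_hasPeriod m hmn hper)⟩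

end Sequence

/-- If Λ₁, Λ₂ ≤ Γ are almost conjugate, then for any γ₁,…,γₙ ∈ Γ there is a
bijection ρ : F(Λ₁,γ₁⋯γₙ) → F(Λ₂,γ₁⋯γₙ) such that for every p ∣ n with
γᵢ = γⱼ whenever i ≡ j (mod n/p), a coset lies in F(Λ₁,γ₁⋯γ_{n/p}) iff its
image lies in F(Λ₂,γ₁⋯γ_{n/p}). -/
theorem exists_compatible_bijection (Γ : Type*) [Group Γ] [Finite Γ]
    (Λ₁ Λ₂ : Subgroup Γ) (h : AlmostConj Λ₁ Λ₂) (n : ℕ) (γ : Fin n → Γ) :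
    ∃ ρ : Fset Λ₁ (partialProd γ n le_rfl) → Fset Λ₂ (partialProd γ n le_rfl),
      Function.Bijective ρ ∧
      ∀ p : ℕ, p ∣ n →
        (∀ i j : Fin n, (i : ℕ) % (n / p) = (j : ℕ) % (n / p) → γ i = γ j) →
        ∀ C : Fset Λ₁ (partialProd γ n le_rfl),
          (C : Set Γ) ∈ Fset Λ₁ (partialProd γ (n / p) (Nat.div_le_self n p)) ↔
          (ρ C : Set Γ) ∈ Fset Λ₂ (partialProd γ (n / p) (Nat.div_le_self n p)) := by
  obtain ⟨x, N, hN, hpow⟩ := exists_partialProd_eq_pow γ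
  obtain ⟨ρ, hρ, hρF⟩ := h.exists_bijective_mem_Fset_pow_iff x N
  rw [hN]
  refine ⟨ρ, hρ, fun p hp hper C => ?_⟩
  obtain ⟨k, hk⟩ := hpow (n / p) (Nat.div_le_self n p) (Nat.div_dvd_of_dvd hp) hper
  rw [hk]
  exact hρF k C
end

section
/- Let G be a finite group with almost conjugate, non-conjugate subgroups H₁ and H₂ such that H₁ is generated by elements h₁, h₂ with the property that for every g ∈ G, not both gh₁ ∈ H₂g and gh₂ ∈ H₂g. Then for every n ∈ ℕ, the group G^n contains a family of 2^n pairwise almost conjugate subgroups {K_φ = ∏_{i=1}^n H_{φ(i)} : φ : {1,…,n} → {1,2}}, and these subgroups are pairwise distinct. -/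
lemma pi_isConj_iff {G : Type*} [Group G] {n : ℕ} (g x : Fin n → G) :
    IsConj g x ↔ ∀ i, IsConj (g i) (x i) := by
  simp only [isConj_iff]
  constructor
  · rintro ⟨c, hc⟩ i
    exact ⟨c i, congrFun hc i⟩
  · intro h
    choose c hc using h
    exact ⟨fun i => c i, funext hc⟩

def piConjEquiv {G : Type*} [Group G] {n : ℕ} (g : Fin n → G) (K : Fin n → Subgroup G) :
    {x : Fin n → G | IsConj g x ∧ x ∈ Subgroup.pi Set.univ K} ≃
      ∀ i, {y : G | IsConj (g i) y ∧ y ∈ K i} where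
  toFun x i := ⟨x.1 i, (pi_isConj_iff g x.1).mp x.2.1 i, x.2.2 i (Set.mem_univ i)⟩
  invFun f := ⟨fun i => (f i).1,
    (pi_isConj_iff g _).mpr fun i => (f i).2.1, fun i _ => (f i).2.2⟩
  left_inv _ := rfl
  right_inv _ := rfl

lemma pi_eq_component {G : Type*} [Group G] {n : ℕ} {K K' : Fin n → Subgroup G}
    (h : Subgroup.pi Set.univ K = Subgroup.pi Set.univ K') (i : Fin n) :
    K i = K' i := by
  ext y
  constructor <;> intro hy
  · have hx : Pi.mulSingle i y ∈ Subgroup.pi Set.univ K := by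
      intro j _
      by_cases hj : j = i
      · subst hj; simpa using hy
      · simp [Pi.mulSingle_eq_of_ne hj, Subgroup.one_mem]
    rw [h] at hx
    simpa using hx i (Set.mem_univ i)
  · have hx : Pi.mulSingle i y ∈ Subgroup.pi Set.univ K' := by
      intro j _
      by_cases hj : j = i
      · subst hj; simpa using hy
      · simp [Pi.mulSingle_eq_of_ne hj, Subgroup.one_mem]
    rw [← h] at hx
    simpa using hx i (Set.mem_univ i)

/-- If a finite group G has almost conjugate, non-conjugate subgroups H₁, H₂,
with H₁ generated by h₁, h₂ such that no g satisfies both gh₁ ∈ H₂g and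
gh₂ ∈ H₂g, then G^n contains 2^n pairwise almost conjugate, pairwise
distinct subgroups K_φ = ∏ᵢ H_{φ(i)}. -/
theorem pow_family_almostConj {G : Type*} [Group G] [Finite G]
    (H : Fin 2 → Subgroup G) (h₁ h₂ : G)
    (hac : AlmostConj (H 0) (H 1))
    (hnc : ¬ ∃ g : G, ∀ x : G, x ∈ H 1 ↔ g⁻¹ * x * g ∈ H 0)
    (hgen : Subgroup.closure ({h₁, h₂} : Set G) = H 0)
    (hcoset : ∀ g : G,
      ¬ ((∃ h ∈ H 1, g * h₁ = h * g) ∧ (∃ h ∈ H 1, g * h₂ = h * g)))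
    (n : ℕ) :
    (∀ φ ψ : Fin n → Fin 2,
      AlmostConj (Subgroup.pi Set.univ fun i => H (φ i))
        (Subgroup.pi Set.univ fun i => H (ψ i))) ∧
    (Function.Injective
      fun φ : Fin n → Fin 2 => Subgroup.pi Set.univ fun i => H (φ i)) ∧
    Nat.card
      (Set.range fun φ : Fin n → Fin 2 =>
        Subgroup.pi Set.univ fun i => H (φ i)) = 2 ^ n := by
  have htwo : ∀ a : Fin 2, a = 0 ∨ a = 1 := by decide
  -- H 0 ≠ H 1
  have hne : H 0 ≠ H 1 := by
    intro heq
    have hh₁ : h₁ ∈ H 0 := hgen ▸ Subgroup.subset_closure (by simp)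
    have hh₂ : h₂ ∈ H 0 := hgen ▸ Subgroup.subset_closure (by simp)
    exact hcoset 1 ⟨⟨h₁, heq ▸ hh₁, by group⟩, ⟨h₂, heq ▸ hh₂, by group⟩⟩
  have hinj : Function.Injective
      fun φ : Fin n → Fin 2 => Subgroup.pi Set.univ fun i => H (φ i) := by
    intro φ ψ h
    funext i
    have := pi_eq_component h i
    rcases htwo (φ i) with h1 | h1 <;> rcases htwo (ψ i) with h2 | h2 <;>
      rw [h1, h2] <;> rw [h1, h2] at this
    · exact absurd this hne
    · exact absurd this.symm hne
  refine ⟨?_, hinj, ?_⟩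
  · intro φ ψ g
    rw [Nat.card_congr (piConjEquiv g fun i => H (φ i)),
      Nat.card_congr (piConjEquiv g fun i => H (ψ i)), Nat.card_pi, Nat.card_pi]
    refine Finset.prod_congr rfl fun i _ => ?_
    rcases htwo (φ i) with h1 | h1 <;> rcases htwo (ψ i) with h2 | h2 <;>
      rw [h1, h2]
    · exact hac (g i)
    · exact (hac (g i)).symm
  · rw [Nat.card_range_of_injective hinj]
    simp [Nat.card_eq_fintype_card]
end
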